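/- Let u : B_R → ℝ be radial (i.e. u(x) depends only on |x|), let r ∈ (0,R), and assume φ ∈ C² touches u from below at re₁ ≠ 0, where e₁ is the first standard basis vector. Then for every index i with 1 < i ≤ N one has D_iφ(re₁) = 0 and D_{ii}φ(re₁) ≤ (1/r) D_1φ(re₁). -/

import Mathlib

/-!
Since `u` is constant on the sphere of radius `r` and `φ < u` there except at `r e₁`, the
restriction of `φ` to that sphere is maximal at `r e₁`. Along the great circle
`θ ↦ r (cos θ e₁ + sin θ eᵢ)` through `r e₁`, the first derivative of `φ` at `θ = 0` is
`r D_iφ(r e₁)`, which must vanish, and the second is `r² D_{ii}φ(r e₁) - r D_1φ(r e₁)`, which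
must be nonpositive.
-/

open MeasureTheory Filter Set Asymptotics
open scoped Topology NNReal

noncomputable section

/-- The `i`-th partial derivative `D_i φ(y)`. -/
def pd (n : ℕ) (φ : EuclideanSpace ℝ (Fin n) → ℝ) (i : Fin n)
    (y : EuclideanSpace ℝ (Fin n)) : ℝ :=
  fderiv ℝ φ y (EuclideanSpace.single i 1)

/-- The second partial derivative `D_{ij} φ(y)`. -/
def pd2 (n : ℕ) (φ : EuclideanSpace ℝ (Fin n) → ℝ) (i j : Fin n)
    (y : EuclideanSpace ℝ (Fin n)) : ℝ :=
  fderiv ℝ (fun z => fderiv ℝ φ z (EuclideanSpace.single j 1)) y (EuclideanSpace.single i 1)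

/-- The normalized `p`-Laplacian
`Δ_p^N φ(y) = Δφ(y) + (p-2)|Dφ(y)|⁻² Σ_{i,j} D_{ij}φ(y) D_iφ(y) D_jφ(y)`. -/
def normPLap (n : ℕ) (p : ℝ) (φ : EuclideanSpace ℝ (Fin n) → ℝ)
    (y : EuclideanSpace ℝ (Fin n)) : ℝ :=
  (∑ i, pd2 n φ i i y) +
    (p - 2) / ‖gradient φ y‖ ^ 2 *
      ∑ i, ∑ j, pd2 n φ i j y * pd n φ i y * pd n φ j y

/-- `φ` touches `u` from below at `x₀` (within the set `s`). -/
def TouchesBelowOn (n : ℕ) (φ u : EuclideanSpace ℝ (Fin n) → ℝ)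
    (s : Set (EuclideanSpace ℝ (Fin n))) (x₀ : EuclideanSpace ℝ (Fin n)) : Prop :=
  φ x₀ = u x₀ ∧ ∀ x ∈ s, x ≠ x₀ → φ x < u x

/-- `φ` touches `u` from above at `x₀` (within the set `s`). -/
def TouchesAboveOn (n : ℕ) (φ u : EuclideanSpace ℝ (Fin n) → ℝ)
    (s : Set (EuclideanSpace ℝ (Fin n))) (x₀ : EuclideanSpace ℝ (Fin n)) : Prop :=
  φ x₀ = u x₀ ∧ ∀ x ∈ s, x ≠ x₀ → u x < φ x

/-- `u` is a (bounded, lower semicontinuous) viscosity supersolution to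
`-|Du|^{q-2} Δ_p^N u = f(|x|)` in `B_R ⊆ ℝ^n`. -/
def IsViscSupersol (n : ℕ) (p q R : ℝ) (f : ℝ → ℝ)
    (u : EuclideanSpace ℝ (Fin n) → ℝ) : Prop :=
  (∃ M, ∀ x ∈ Metric.ball (0 : EuclideanSpace ℝ (Fin n)) R, |u x| ≤ M) ∧
    LowerSemicontinuousOn u (Metric.ball 0 R) ∧
    ∀ φ : EuclideanSpace ℝ (Fin n) → ℝ, ContDiff ℝ 2 φ →
      ∀ x₀ ∈ Metric.ball (0 : EuclideanSpace ℝ (Fin n)) R,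
        TouchesBelowOn n φ u (Metric.ball 0 R) x₀ →
        (∀ x ∈ Metric.ball (0 : EuclideanSpace ℝ (Fin n)) R, x ≠ x₀ → gradient φ x ≠ 0) →
        0 ≤ Filter.limsup
              (fun y => -(‖gradient φ y‖ ^ (q - 2) * normPLap n p φ y)) (𝓝[≠] x₀)
            - f ‖x₀‖

/-- `u` is a (bounded, upper semicontinuous) viscosity subsolution to
`-|Du|^{q-2} Δ_p^N u = f(|x|)` in `B_R ⊆ ℝ^n`. -/
def IsViscSubsol (n : ℕ) (p q R : ℝ) (f : ℝ → ℝ)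
    (u : EuclideanSpace ℝ (Fin n) → ℝ) : Prop :=
  (∃ M, ∀ x ∈ Metric.ball (0 : EuclideanSpace ℝ (Fin n)) R, |u x| ≤ M) ∧
    UpperSemicontinuousOn u (Metric.ball 0 R) ∧
    ∀ φ : EuclideanSpace ℝ (Fin n) → ℝ, ContDiff ℝ 2 φ →
      ∀ x₀ ∈ Metric.ball (0 : EuclideanSpace ℝ (Fin n)) R,
        TouchesAboveOn n φ u (Metric.ball 0 R) x₀ →
        (∀ x ∈ Metric.ball (0 : EuclideanSpace ℝ (Fin n)) R, x ≠ x₀ → gradient φ x ≠ 0) →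
        Filter.liminf
            (fun y => -(‖gradient φ y‖ ^ (q - 2) * normPLap n p φ y)) (𝓝[≠] x₀)
          - f ‖x₀‖ ≤ 0

theorem IsLocalMax.deriv_deriv_nonpos {f : ℝ → ℝ} {x₀ : ℝ} (h : IsLocalMax f x₀)
    (hc : ContinuousAt f x₀) : deriv (deriv f) x₀ ≤ 0 := by
  -- A positive second derivative would make `x₀` a local minimum too, so `f` would be locally constant.
  by_contra! hpos
  have hconst : f =ᶠ[𝓝 x₀] fun _ => f x₀ := by
    filter_upwards [isLocalMin_of_deriv_deriv_pos hpos h.deriv_eq_zero hc, h] with x hmin hmax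
    exact le_antisymm hmax hmin
  have hderiv : deriv f =ᶠ[𝓝 x₀] fun _ => 0 := by
    filter_upwards [hconst.eventuallyEq_nhds] with x hx
    rw [hx.deriv_eq, deriv_const]
  rw [hderiv.deriv_eq, deriv_const] at hpos
  exact lt_irrefl 0 hpos

section Curve

variable {E : Type*} [NormedAddCommGroup E] [NormedSpace ℝ E]

theorem deriv_comp_eq_fderiv_apply {φ : E → ℝ} (hφ : Differentiable ℝ φ) {γ γ' : ℝ → E}
    (hγ : ∀ t, HasDerivAt γ (γ' t) t) : deriv (φ ∘ γ) = fun t => fderiv ℝ φ (γ t) (γ' t) :=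
  funext fun t => ((hφ (γ t)).hasFDerivAt.comp_hasDerivAt t (hγ t)).deriv

theorem hasDerivAt_deriv_comp {φ : E → ℝ} (hφ : ContDiff ℝ 2 φ) {γ γ' : ℝ → E} {γ'' : E} {t : ℝ}
    (hγ : ∀ s, HasDerivAt γ (γ' s) s) (hγ' : HasDerivAt γ' γ'' t) :
    HasDerivAt (deriv (φ ∘ γ))
      (fderiv ℝ (fderiv ℝ φ) (γ t) (γ' t) (γ' t) + fderiv ℝ φ (γ t) γ'') t := by
  rw [deriv_comp_eq_fderiv_apply (hφ.differentiable (by norm_num)) hγ]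
  have hDφ : HasFDerivAt (fderiv ℝ φ) (fderiv ℝ (fderiv ℝ φ) (γ t)) (γ t) :=
    ((hφ.fderiv_right (m := 1) (by norm_num)).differentiable (by norm_num) _).hasFDerivAt
  exact (hDφ.comp_hasDerivAt t (hγ t)).clm_apply hγ'

def greatCircle (r : ℝ) (e f : E) (θ : ℝ) : E :=
  r • (Real.cos θ • e + Real.sin θ • f)

theorem greatCircle_zero (r : ℝ) (e f : E) : greatCircle r e f 0 = r • e := by
  simp [greatCircle]

theorem hasDerivAt_greatCircle (r : ℝ) (e f : E) (θ : ℝ) :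
    HasDerivAt (greatCircle r e f) (greatCircle r f (-e) θ) θ := by
  refine ((((Real.hasDerivAt_cos θ).smul_const e).add
    ((Real.hasDerivAt_sin θ).smul_const f)).const_smul r).congr_deriv ?_
  simp only [greatCircle, neg_smul, smul_neg]
  rw [add_comm]

theorem fderiv_apply_eq_zero_and_hessian_le_of_isMaxOn_greatCircle {φ : E → ℝ}
    (hφ : ContDiff ℝ 2 φ) {r : ℝ} (hr : 0 < r) {e f : E}
    (hmax : IsMaxOn (φ ∘ greatCircle r e f) univ 0) :
    fderiv ℝ φ (r • e) f = 0 ∧ r * fderiv ℝ (fderiv ℝ φ) (r • e) f f ≤ fderiv ℝ φ (r • e) e := by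
  have hγ := hasDerivAt_greatCircle r e f
  have hγ' : HasDerivAt (greatCircle r f (-e)) (-(r • e)) 0 := by
    simpa [greatCircle_zero] using hasDerivAt_greatCircle r f (-e) 0
  have hloc : IsLocalMax (φ ∘ greatCircle r e f) 0 := hmax.isLocalMax univ_mem
  have hφd : Differentiable ℝ φ := hφ.differentiable (by norm_num)
  have hfirst := hloc.deriv_eq_zero
  have hsecond := hloc.deriv_deriv_nonpos ((hφd _).continuousAt.comp (hγ 0).continuousAt)
  rw [deriv_comp_eq_fderiv_apply hφd hγ] at hfirst
  rw [(hasDerivAt_deriv_comp hφ hγ hγ').deriv] at hsecond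
  simp only [greatCircle_zero, map_smul, smul_apply, map_neg, smul_eq_mul]
    at hfirst hsecond
  constructor
  · exact (mul_eq_zero.1 hfirst).resolve_left hr.ne'
  · nlinarith

end Curve

theorem norm_greatCircle {E : Type*} [NormedAddCommGroup E] [InnerProductSpace ℝ E] {e f : E}
    (he : ‖e‖ = 1) (hf : ‖f‖ = 1) (hef : inner ℝ e f = 0) (r θ : ℝ) :
    ‖greatCircle r e f θ‖ = |r| := by
  have hsq : ‖Real.cos θ • e + Real.sin θ • f‖ ^ 2 = 1 := by
    rw [norm_add_sq_real, norm_smul, norm_smul, real_inner_smul_left, real_inner_smul_right,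
      hef, he, hf, Real.norm_eq_abs, Real.norm_eq_abs]
    nlinarith [sq_abs (Real.cos θ), sq_abs (Real.sin θ), Real.cos_sq_add_sin_sq θ]
  rw [greatCircle, norm_smul, Real.norm_eq_abs,
    (pow_eq_one_iff_of_nonneg (norm_nonneg _) two_ne_zero).1 hsq, mul_one]

theorem TouchesBelowOn.isMaxOn_sphere {n : ℕ} {φ u : EuclideanSpace ℝ (Fin n) → ℝ} {R : ℝ}
    {x₀ : EuclideanSpace ℝ (Fin n)} (htouch : TouchesBelowOn n φ u (Metric.ball 0 R) x₀)
    (hrad : ∀ x, ‖x‖ = ‖x₀‖ → u x = u x₀) (hx₀ : ‖x₀‖ < R) :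
    IsMaxOn φ (Metric.sphere 0 ‖x₀‖) x₀ := by
  refine isMaxOn_iff.2 fun x hx => ?_
  rw [mem_sphere_zero_iff_norm] at hx
  obtain rfl | hne := eq_or_ne x x₀
  · exact le_rfl
  · rw [htouch.1, ← hrad x hx]
    exact (htouch.2 x (mem_ball_zero_iff.2 (hx ▸ hx₀)) hne).le

theorem pd2_eq_fderiv_fderiv {n : ℕ} {φ : EuclideanSpace ℝ (Fin n) → ℝ} (i j : Fin n)
    {y : EuclideanSpace ℝ (Fin n)} (hφ : DifferentiableAt ℝ (fderiv ℝ φ) y) :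
    pd2 n φ i j y =
      fderiv ℝ (fderiv ℝ φ) y (EuclideanSpace.single i 1) (EuclideanSpace.single j 1) := by
  rw [pd2, fderiv_clm_apply hφ (differentiableAt_const _)]
  simp

/-- Lemma 3.5: if the radial function `u` is touched from below at
`r e₁ ≠ 0` by a `C²` function `φ`, then `D_i φ(r e₁) = 0` and
`D_{ii} φ(r e₁) ≤ (1/r) D_1 φ(r e₁)` for all `1 < i ≤ N`. -/
theorem jets_of_radial_function
    (N : ℕ) (hN : 2 ≤ N) (R : ℝ)
    (u φ : EuclideanSpace ℝ (Fin N) → ℝ)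
    (hrad : ∀ x y : EuclideanSpace ℝ (Fin N), ‖x‖ = ‖y‖ → u x = u y)
    (r : ℝ) (hr : r ∈ Set.Ioo 0 R)
    (hφ : ContDiff ℝ 2 φ)
    (htouch : TouchesBelowOn N φ u (Metric.ball 0 R)
      (r • EuclideanSpace.single (⟨0, by omega⟩ : Fin N) 1)) :
    ∀ i : Fin N, i ≠ (⟨0, by omega⟩ : Fin N) →
      pd N φ i (r • EuclideanSpace.single (⟨0, by omega⟩ : Fin N) 1) = 0 ∧
      pd2 N φ i i (r • EuclideanSpace.single (⟨0, by omega⟩ : Fin N) 1) ≤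
        (1 / r) * pd N φ (⟨0, by omega⟩ : Fin N)
          (r • EuclideanSpace.single (⟨0, by omega⟩ : Fin N) 1) := by
  intro i hi
  set e := EuclideanSpace.single (⟨0, by omega⟩ : Fin N) (1 : ℝ)
  set f := EuclideanSpace.single i (1 : ℝ)
  have horth := EuclideanSpace.orthonormal_single (𝕜 := ℝ) (ι := Fin N)
  have hx₀ : ‖r • e‖ = r := by simp [e, norm_smul, abs_of_pos hr.1]
  have hsphere : IsMaxOn φ (Metric.sphere 0 r) (r • e) := by
    simpa only [hx₀] using htouch.isMaxOn_sphere (fun x hx => hrad x _ hx) (hx₀.symm ▸ hr.2)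
  have hcircle : MapsTo (greatCircle r e f) univ (Metric.sphere 0 r) := fun θ _ => by
    rw [mem_sphere_zero_iff_norm, norm_greatCircle (horth.1 _) (horth.1 i) (horth.2 hi.symm),
      abs_of_pos hr.1]
  obtain ⟨hfirst, hsecond⟩ := fderiv_apply_eq_zero_and_hessian_le_of_isMaxOn_greatCircle hφ hr.1
    (hsphere.comp_mapsTo hcircle (greatCircle_zero r e f))
  refine ⟨hfirst, ?_⟩
  rw [pd2_eq_fderiv_fderiv i i ((hφ.fderiv_right (m := 1) (by norm_num)).differentiable
    (by norm_num) _), one_div, ← div_eq_inv_mul, le_div_iff₀' hr.1]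
  exact hsecond
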